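/- arXiv:2409.10257 — 7 statements merged into one kernel-verified Lean document; each statement's English description precedes it below -/
import Mathlib

section
/- (Gram matrix is the identity) For all q, q' ∈ Q = {−2π/3, 0, 2π/3}^m and every p ∈ ℝ^m, K̃(p+q, p+q') = ∏_{j=1}^m (1 + 2·cos(q_j − q'_j))/3 equals 1 if q = q' and equals 0 otherwise. -/
open MeasureTheory Real Finset

noncomputable section

/-- `Ω = {-1,0,1}^m` as a finite set of integer vectors. -/
def Omega (m : ℕ) : Finset (Fin m → ℤ) := Finset.Icc (-1) 1

/-- `ωᵀz = ∑ j, ω j * z j`. -/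
def dotIZ {m : ℕ} (ω : Fin m → ℤ) (z : Fin m → ℝ) : ℝ := ∑ j, (ω j : ℝ) * z j

/-- A function `g : ℝ^m → ℝ` lies in `H` if it has a Fourier representation with
frequencies in `Ω = {-1,0,1}^m` and coefficients satisfying `c (-ω) = conj (c ω)`. -/
def IsInH (m : ℕ) (g : (Fin m → ℝ) → ℝ) : Prop :=
  ∃ c : (Fin m → ℤ) → ℂ,
    (∀ ω ∈ Omega m, c (-ω) = starRingEnd ℂ (c ω)) ∧
    ∀ z : Fin m → ℝ, (g z : ℂ) =
      ∑ ω ∈ Omega m, c ω * Complex.exp (Complex.I * ((dotIZ ω z : ℝ) : ℂ))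

/-- The kernel `K̃(x,z) = ∏ j, (1 + 2 cos (x j - z j)) / 3`. -/
def Ktilde (m : ℕ) (x z : Fin m → ℝ) : ℝ :=
  ∏ j, (1 + 2 * Real.cos (x j - z j)) / 3

/-- The grid `Q = {-2π/3, 0, 2π/3}^m` as a finite set of real vectors. -/
def Qgrid (m : ℕ) : Finset (Fin m → ℝ) :=
  (Omega m).image (fun ω j => 2 * π / 3 * (ω j : ℝ))

/-- The set of points of `Q` having at most `L` non-zero entries. -/
def QgridL (m L : ℕ) : Finset (Fin m → ℝ) :=
  (Qgrid m).filter (fun q => (Finset.univ.filter (fun j => q j ≠ 0)).card ≤ L)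

/-- The cube `[-π, π]^m`. -/
def cube (m : ℕ) : Set (Fin m → ℝ) := Set.pi Set.univ fun _ : Fin m => Set.Icc (-π) π

lemma cos23 : Real.cos (2 * π / 3) = -(1/2) := by
  have : (2 * π / 3) = π - π / 3 := by ring
  rw [this, Real.cos_pi_sub, Real.cos_pi_div_three]

lemma cos43 : Real.cos (4 * π / 3) = -(1/2) := by
  have : (4 * π / 3) = π + π / 3 := by ring
  rw [this, Real.cos_add, Real.cos_pi, Real.sin_pi, Real.cos_pi_div_three]
  ring

lemma factor (a b : ℝ) (ha : a ∈ ({-(2 * π / 3), 0, 2 * π / 3} : Set ℝ))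
    (hb : b ∈ ({-(2 * π / 3), 0, 2 * π / 3} : Set ℝ)) :
    (1 + 2 * Real.cos (a - b)) / 3 = if a = b then 1 else 0 := by
  have hπ := Real.pi_pos
  have h23 := cos23
  have h43 := cos43
  rcases ha with h | h | h <;> rcases hb with h' | h' | h' <;> subst h <;> subst h'
  · rw [if_pos rfl, sub_self, Real.cos_zero]; norm_num
  · rw [if_neg (by intro h; linarith), sub_zero, Real.cos_neg, h23]; norm_num
  · rw [if_neg (by intro h; linarith),
      show -(2*π/3) - 2*π/3 = -(4*π/3) by ring, Real.cos_neg, h43]; norm_num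
  · rw [if_neg (by intro h; linarith), show (0:ℝ) - -(2*π/3) = 2*π/3 by ring, h23]; norm_num
  · rw [if_pos rfl, sub_self, Real.cos_zero]; norm_num
  · rw [if_neg (by intro h; linarith), zero_sub, Real.cos_neg, h23]; norm_num
  · rw [if_neg (by intro h; linarith),
      show 2*π/3 - -(2*π/3) = 4*π/3 by ring, h43]; norm_num
  · rw [if_neg (by intro h; linarith), sub_zero, h23]; norm_num
  · rw [if_pos rfl, sub_self, Real.cos_zero]; norm_num


theorem stmt_3 (m : ℕ) (hm : 0 < m) (p q q' : Fin m → ℝ)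
    (hq : ∀ j, q j ∈ ({-(2 * π / 3), 0, 2 * π / 3} : Set ℝ))
    (hq' : ∀ j, q' j ∈ ({-(2 * π / 3), 0, 2 * π / 3} : Set ℝ)) :
    Ktilde m (p + q) (p + q') = ∏ j, (1 + 2 * Real.cos (q j - q' j)) / 3 ∧
    Ktilde m (p + q) (p + q') = if q = q' then 1 else 0 := by

  have h1 : Ktilde m (p + q) (p + q')
      = ∏ j, (1 + 2 * Real.cos (q j - q' j)) / 3 := by
    unfold Ktilde
    apply Finset.prod_congr rfl
    intro j _
    simp [add_sub_add_left_eq_sub]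
  refine ⟨h1, h1.trans ?_⟩
  by_cases h : q = q'
  · subst h
    rw [if_pos rfl]
    apply Finset.prod_eq_one
    intro j _
    rw [factor _ _ (hq j) (hq j), if_pos rfl]
  · rw [if_neg h]
    obtain ⟨j, hj⟩ : ∃ j, q j ≠ q' j := by
      by_contra hc; push_neg at hc; exact h (funext hc)
    exact Finset.prod_eq_zero (Finset.mem_univ j)
      (by rw [factor _ _ (hq j) (hq' j), if_neg hj])
end
end

section
/- (Orthonormality of kernel translates) For every p ∈ ℝ^m and all q, q' ∈ Q = {−2π/3, 0, 2π/3}^m, ∫_{[−π,π]^m} K̃(p+q, z)·K̃(p+q', z) dz equals (2π/3)^m if q = q' and equals 0 otherwise. -/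
/-!
By Fubini the integral over the cube factorises into one-dimensional integrals, and by
the product-to-sum formulas the `j`-th factor is `2π (1 + 2 cos (q j - q' j)) / 9`. This is
`2π / 3` when `q j = q' j`; two distinct points of `{-2π/3, 0, 2π/3}` differ by `±2π/3` or
`±4π/3`, where `1 + 2 cos` vanishes.
-/

open MeasureTheory Real Finset

noncomputable section

theorem setIntegral_univ_pi_prod {ι : Type*} [Fintype ι] {E : ι → Type*}
    [∀ i, MeasurableSpace (E i)] (μ : (i : ι) → Measure (E i)) [∀ i, SigmaFinite (μ i)]
    (s : (i : ι) → Set (E i)) (f : (i : ι) → E i → ℝ) :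
    ∫ x in Set.univ.pi s, ∏ i, f i (x i) ∂Measure.pi μ = ∏ i, ∫ x in s i, f i x ∂μ i := by
  rw [Measure.restrict_pi_pi, integral_fintype_prod_eq_prod]

theorem integral_Icc_kernel_mul_kernel (a b : ℝ) :
    ∫ x in Set.Icc (-π) π, (1 + 2 * cos (a - x)) / 3 * ((1 + 2 * cos (b - x)) / 3) =
      2 * π * (1 + 2 * cos (a - b)) / 9 := by
  -- the integrand is `(1 + 2 cos (a - b) + 2 cos (a - x) + 2 cos (b - x) + 2 cos (a + b - 2x)) / 9`
  have hderiv : ∀ x, HasDerivAt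
      (fun x => (x + 2 * cos (a - b) * x - 2 * sin (a - x) - 2 * sin (b - x)
        - sin (a + b - 2 * x)) / 9)
      ((1 + 2 * cos (a - x)) / 3 * ((1 + 2 * cos (b - x)) / 3)) x := by
    intro x
    have ha : HasDerivAt (fun x => a - x) (-1) x := by simpa using (hasDerivAt_id x).const_sub a
    have hb : HasDerivAt (fun x => b - x) (-1) x := by simpa using (hasDerivAt_id x).const_sub b
    have hab : HasDerivAt (fun x => a + b - 2 * x) (-2) x := by
      simpa using ((hasDerivAt_id x).const_mul 2).const_sub (a + b)
    refine ((((((hasDerivAt_id x).add ((hasDerivAt_id x).const_mul (2 * cos (a - b)))).sub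
      (ha.sin.const_mul 2)).sub (hb.sin.const_mul 2)).sub hab.sin).div_const 9).congr_deriv ?_
    have hsub := cos_sub (a - x) (b - x)
    have hadd := cos_add (a - x) (b - x)
    rw [show a - x - (b - x) = a - b by ring] at hsub
    rw [show a - x + (b - x) = a + b - 2 * x by ring] at hadd
    linear_combination (2 / 9) * hsub + (2 / 9) * hadd
  rw [integral_Icc_eq_integral_Ioc, ← intervalIntegral.integral_of_le (by linarith [pi_pos]),
    intervalIntegral.integral_eq_sub_of_hasDerivAt (fun x _ => hderiv x)
      (Continuous.intervalIntegrable (by fun_prop) _ _)]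
  rw [show a + b - 2 * -π = a + b + 2 * π by ring, sin_add_two_pi, sin_sub_two_pi,
    sub_neg_eq_add, sub_neg_eq_add, sin_add_pi, sin_add_pi, sin_sub_pi, sin_sub_pi]
  ring

theorem integral_cube_Ktilde_mul_Ktilde (m : ℕ) (x y : Fin m → ℝ) :
    ∫ z in cube m, Ktilde m x z * Ktilde m y z = ∏ j, 2 * π * (1 + 2 * cos (x j - y j)) / 9 := by
  simp only [Ktilde, ← prod_mul_distrib]
  rw [cube, volume_pi]
  exact (setIntegral_univ_pi_prod _ _ _).trans
    (prod_congr rfl fun j _ => integral_Icc_kernel_mul_kernel (x j) (y j))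

theorem cos_sub_eq_neg_half_of_ne {a b : ℝ} (ha : a ∈ ({-(2 * π / 3), 0, 2 * π / 3} : Set ℝ))
    (hb : b ∈ ({-(2 * π / 3), 0, 2 * π / 3} : Set ℝ)) (hab : a ≠ b) :
    cos (a - b) = -(1 / 2) := by
  have h2 : cos (2 * π / 3) = -(1 / 2) := by
    rw [show 2 * π / 3 = π - π / 3 by ring, cos_pi_sub, cos_pi_div_three]
  have h4 : cos (4 * π / 3) = -(1 / 2) := by
    rw [show 4 * π / 3 = π / 3 + π by ring, cos_add_pi, cos_pi_div_three]
  rcases ha with rfl | rfl | rfl <;> rcases hb with rfl | rfl | rfl <;>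
    first
    | exact absurd rfl hab
    | (convert h2 using 2; linarith)
    | (convert h4 using 2; linarith)
    | (rw [← cos_neg]; convert h2 using 2; linarith)
    | (rw [← cos_neg]; convert h4 using 2; linarith)

theorem stmt_4_general (m : ℕ) (p q q' : Fin m → ℝ)
    (hq : ∀ j, q j ∈ ({-(2 * π / 3), 0, 2 * π / 3} : Set ℝ))
    (hq' : ∀ j, q' j ∈ ({-(2 * π / 3), 0, 2 * π / 3} : Set ℝ)) :
    ∫ z in cube m, Ktilde m (p + q) z * Ktilde m (p + q') z =
      if q = q' then (2 * π / 3) ^ m else 0 := by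
  simp only [integral_cube_Ktilde_mul_Ktilde, Pi.add_apply, add_sub_add_left_eq_sub]
  split_ifs with hqq
  · subst hqq
    simp only [sub_self, cos_zero, prod_const, card_univ, Fintype.card_fin]
    ring
  · obtain ⟨j, hj⟩ := Function.ne_iff.mp hqq
    refine prod_eq_zero (mem_univ j) ?_
    rw [cos_sub_eq_neg_half_of_ne (hq j) (hq' j) hj]
    ring

theorem stmt_4 (m : ℕ) (hm : 0 < m) (p q q' : Fin m → ℝ)
    (hq : ∀ j, q j ∈ ({-(2 * π / 3), 0, 2 * π / 3} : Set ℝ))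
    (hq' : ∀ j, q' j ∈ ({-(2 * π / 3), 0, 2 * π / 3} : Set ℝ)) :
    ∫ z in cube m, Ktilde m (p + q) z * Ktilde m (p + q') z =
      if q = q' then (2 * π / 3) ^ m else 0 :=
  stmt_4_general m p q q' hq hq'
end
end

section
/- (Exact reconstruction from the shifted grid) If g : ℝ^m → ℝ lies in H, then for every p ∈ ℝ^m and every θ ∈ ℝ^m, g(θ) = Σ_{q ∈ Q} g(p + q) · K̃(p + q, θ), where Q = {−2π/3, 0, 2π/3}^m. -/
open MeasureTheory Real Finset

noncomputable section

/-! Since `(1 + 2 cos t) / 3 = (e^{-it} + 1 + e^{it}) / 3`, the kernel is itself a trigonometric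
polynomial with frequencies in `Ω`. Summing `e^{iωᵀx} K̃(x, θ)` over the shifted grid then factors
over the coordinates into character sums `∑_{k ∈ {-1,0,1}} ζ^{nk}` of a primitive cube root of
unity `ζ`, which vanish unless `3 ∣ n`. Two frequencies in `{-1,0,1}` add up to a multiple of `3`
only when they are opposite, so exactly one term survives and the grid reproduces every
exponential `e^{iωᵀθ}` with `ω ∈ Ω`, hence every `g ∈ H` by linearity. -/

open Complex

lemma sum_Icc_neg_one_one {M : Type*} [AddCommMonoid M] (f : ℤ → M) :
    ∑ k ∈ Icc (-1 : ℤ) 1, f k = f (-1) + f 0 + f 1 := by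
  rw [show Icc (-1 : ℤ) 1 = {-1, 0, 1} by decide, sum_insert (by decide),
    sum_insert (by decide), sum_singleton, add_assoc]

lemma IsPrimitiveRoot.sum_zpow_mul_Icc {K : Type*} [Field K] {ζ : K} (hζ : IsPrimitiveRoot ζ 3)
    (n : ℤ) : ∑ k ∈ Icc (-1 : ℤ) 1, ζ ^ (n * k) = if (3 : ℤ) ∣ n then 3 else 0 := by
  simp_rw [zpow_mul]
  rw [sum_Icc_neg_one_one]
  split_ifs with h3
  · rw [(hζ.zpow_eq_one_iff_dvd n).mpr (by exact_mod_cast h3)]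
    norm_num
  · have hz1 : ζ ^ n ≠ 1 := mt (hζ.zpow_eq_one_iff_dvd n).mp (by exact_mod_cast h3)
    have hz3 : (ζ ^ n) ^ 3 = 1 := by
      rw [← zpow_natCast, ← zpow_mul, mul_comm, zpow_mul, zpow_natCast, hζ.pow_eq_one, one_zpow]
    have hz0 : ζ ^ n ≠ 0 := fun h ↦ by simp [h] at hz3
    have hsum : (ζ ^ n) ^ 2 + ζ ^ n + 1 = 0 := by
      have hcube : (ζ ^ n - 1) * ((ζ ^ n) ^ 2 + ζ ^ n + 1) = 0 := by linear_combination hz3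
      exact (mul_eq_zero.mp hcube).resolve_left (sub_ne_zero.mpr hz1)
    simp only [zpow_neg, zpow_one, zpow_zero]
    field_simp
    linear_combination hsum

lemma sum_cexp_mul_grid (n : ℤ) (a : ℝ) :
    ∑ k ∈ Icc (-1 : ℤ) 1, cexp (I * (n * ((a + 2 * π / 3 * k : ℝ) : ℂ))) =
      if (3 : ℤ) ∣ n then 3 * cexp (I * (n * a)) else 0 := by
  have hterm (k : ℤ) : cexp (I * (n * ((a + 2 * π / 3 * k : ℝ) : ℂ))) =
      cexp (I * (n * a)) * cexp (2 * π * I / (3 : ℕ)) ^ (n * k) := by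
    rw [← Complex.exp_int_mul, ← Complex.exp_add]
    congr 1
    push_cast
    ring
  simp_rw [hterm, ← mul_sum, (isPrimitiveRoot_exp 3 (by norm_num)).sum_zpow_mul_Icc]
  split_ifs <;> ring

lemma ofReal_one_add_two_cos_div_three (t : ℝ) :
    (((1 + 2 * Real.cos t) / 3 : ℝ) : ℂ) = (∑ l ∈ Icc (-1 : ℤ) 1, cexp (I * (l * t))) / 3 := by
  rw [sum_Icc_neg_one_one]
  push_cast
  simp only [two_cos, zero_mul, one_mul, neg_mul, mul_zero, Complex.exp_zero]
  ring_nf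

lemma sum_cexp_mul_kernel_grid {n : ℤ} (hn : n ∈ Icc (-1 : ℤ) 1) (a b : ℝ) :
    ∑ k ∈ Icc (-1 : ℤ) 1, cexp (I * (n * ((a + 2 * π / 3 * k : ℝ) : ℂ))) *
      (((1 + 2 * Real.cos (a + 2 * π / 3 * k - b)) / 3 : ℝ) : ℂ) = cexp (I * (n * b)) := by
  calc _ = ∑ l ∈ Icc (-1 : ℤ) 1, cexp (-(I * (l * b))) *
          (∑ k ∈ Icc (-1 : ℤ) 1, cexp (I * ((n + l : ℤ) * ((a + 2 * π / 3 * k : ℝ) : ℂ)))) /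
            3 := by
        simp_rw [ofReal_one_add_two_cos_div_three, mul_div_assoc', mul_sum, sum_div]
        rw [sum_comm]
        refine sum_congr rfl fun l _ ↦ sum_congr rfl fun k _ ↦ ?_
        rw [← Complex.exp_add, ← Complex.exp_add]
        congr 2
        push_cast
        ring
    _ = ∑ l ∈ Icc (-1 : ℤ) 1, cexp (-(I * (l * b))) *
          (if (3 : ℤ) ∣ n + l then 3 * cexp (I * ((n + l : ℤ) * a)) else 0) / 3 := by
        simp_rw [sum_cexp_mul_grid]
    _ = cexp (I * (n * b)) := by
        have hn' : -n ∈ Icc (-1 : ℤ) 1 := by simp only [mem_Icc] at hn ⊢; omega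
        rw [sum_eq_single_of_mem (-n) hn']
        · simp
        · intro l hl hln
          simp only [mem_Icc] at hn hl
          rw [if_neg (by omega)]
          simp

lemma Omega_eq_piFinset (m : ℕ) : Omega m = Fintype.piFinset fun _ ↦ Icc (-1 : ℤ) 1 :=
  Pi.Icc_eq _ _

lemma cexp_I_mul_dotIZ {m : ℕ} (ω : Fin m → ℤ) (z : Fin m → ℝ) :
    cexp (I * dotIZ ω z) = ∏ j, cexp (I * (ω j * z j)) := by
  rw [dotIZ, ← Complex.exp_sum]
  push_cast
  rw [mul_sum]

def gridPoint {m : ℕ} (ν : Fin m → ℤ) : Fin m → ℝ := fun j ↦ 2 * π / 3 * ν j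

lemma gridPoint_injective (m : ℕ) : Function.Injective (gridPoint (m := m)) := fun ν ν' h ↦
  funext fun j ↦ by
    have := congrFun h j
    simp only [gridPoint, mul_eq_mul_left_iff, Int.cast_inj] at this
    exact this.resolve_right (by positivity)

lemma Qgrid_eq_image_gridPoint (m : ℕ) : Qgrid m = (Omega m).image gridPoint := rfl

lemma sum_cexp_dotIZ_mul_Ktilde_grid {m : ℕ} {ω : Fin m → ℤ} (hω : ω ∈ Omega m)
    (p θ : Fin m → ℝ) :
    ∑ ν ∈ Omega m, cexp (I * dotIZ ω (p + gridPoint ν)) * Ktilde m (p + gridPoint ν) θ =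
      cexp (I * dotIZ ω θ) := by
  rw [Omega_eq_piFinset] at hω ⊢
  rw [cexp_I_mul_dotIZ, ← prod_congr rfl fun j _ ↦ sum_cexp_mul_kernel_grid
    (Fintype.mem_piFinset.mp hω j) (p j) (θ j), prod_univ_sum]
  refine sum_congr rfl fun ν _ ↦ ?_
  rw [cexp_I_mul_dotIZ, Ktilde, prod_mul_distrib]
  simp only [Pi.add_apply, gridPoint]
  push_cast
  rfl

theorem stmt_5_general (m : ℕ) (g : (Fin m → ℝ) → ℝ) (hg : IsInH m g)
    (p θ : Fin m → ℝ) :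
    g θ = ∑ q ∈ Qgrid m, g (p + q) * Ktilde m (p + q) θ := by
  obtain ⟨c, -, hrep⟩ := hg
  rw [Qgrid_eq_image_gridPoint, sum_image fun ν _ ν' _ h ↦ gridPoint_injective m h]
  apply Complex.ofReal_injective
  push_cast
  calc (g θ : ℂ) = ∑ ω ∈ Omega m, c ω * cexp (I * dotIZ ω θ) := hrep θ
    _ = ∑ ω ∈ Omega m, c ω * ∑ ν ∈ Omega m,
          cexp (I * dotIZ ω (p + gridPoint ν)) * Ktilde m (p + gridPoint ν) θ :=
        sum_congr rfl fun ω hω ↦ by rw [sum_cexp_dotIZ_mul_Ktilde_grid hω]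
    _ = ∑ ν ∈ Omega m, (g (p + gridPoint ν) : ℂ) * Ktilde m (p + gridPoint ν) θ := by
        simp_rw [hrep, mul_sum, sum_mul, mul_assoc]
        exact sum_comm

theorem stmt_5 (m : ℕ) (hm : 0 < m) (g : (Fin m → ℝ) → ℝ) (hg : IsInH m g)
    (p θ : Fin m → ℝ) :
    g θ = ∑ q ∈ Qgrid m, g (p + q) * Ktilde m (p + q) θ :=
  stmt_5_general m g hg p θ
end
end

section
/- (Well-definedness of the kernel interpolant) Let D be a positive integer, let p_1, …, p_D ∈ ℝ^m, and let g : ℝ^m → ℝ lie in H. If η, η' ∈ ℝ^D both satisfy Σ_{j=1}^D K̃(p_i, p_j)·η_j = g(p_i) = Σ_{j=1}^D K̃(p_i, p_j)·η'_j for all i ∈ {1, …, D}, then Σ_{j=1}^D η_j·K̃(p_j, θ) = Σ_{j=1}^D η'_j·K̃(p_j, θ) for every θ ∈ ℝ^m. -/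
open MeasureTheory Real Finset

noncomputable section

lemma factor_eq' (t : ℝ) : ((1 + 2 * Real.cos t : ℝ) : ℂ) / 3 =
    ∑ k ∈ Finset.Icc (-1:ℤ) 1, (3:ℂ)⁻¹ * Complex.exp (Complex.I * (k:ℂ) * (t:ℂ)) := by
  rw [show (Finset.Icc (-1:ℤ) 1) = {-1, 0, 1} from by decide]
  rw [show ({-1,0,1} : Finset ℤ) = insert (-1) (insert 0 {1}) from rfl]
  rw [Finset.sum_insert (by decide), Finset.sum_insert (by decide), Finset.sum_singleton]
  push_cast
  rw [Complex.cos]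
  rw [show Complex.I * 0 * (t:ℂ) = 0 by ring, Complex.exp_zero,
    show Complex.I * -1 * (t:ℂ) = -(t:ℂ) * Complex.I by ring,
    show Complex.I * 1 * (t:ℂ) = (t:ℂ) * Complex.I by ring]
  ring

lemma omega_eq' (m : ℕ) : Omega m = Fintype.piFinset (fun _ : Fin m => Finset.Icc (-1:ℤ) 1) := by
  ext ω
  simp [Omega, Fintype.mem_piFinset, Finset.mem_Icc, Pi.le_def, forall_and]

lemma kernel_expand' (m : ℕ) (x z : Fin m → ℝ) :
    ((Ktilde m x z : ℝ) : ℂ) = ∑ ω ∈ Omega m, (3:ℂ)⁻¹ ^ m *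
      (Complex.exp (Complex.I * ((dotIZ ω x : ℝ) : ℂ)) *
        Complex.exp (-(Complex.I * ((dotIZ ω z : ℝ) : ℂ)))) := by
  have h1 : ((Ktilde m x z : ℝ) : ℂ) =
      ∏ j, (((1 + 2 * Real.cos (x j - z j) : ℝ) : ℂ) / 3) := by
    rw [Ktilde]; push_cast; rfl
  rw [h1]
  simp_rw [factor_eq']
  rw [Finset.prod_univ_sum]
  rw [omega_eq']
  refine Finset.sum_congr rfl fun ω _ => ?_
  rw [Finset.prod_mul_distrib, Finset.prod_const, Finset.card_univ, Fintype.card_fin]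
  congr 1
  rw [← Complex.exp_sum]
  rw [← Complex.exp_add]
  congr 1
  rw [dotIZ, dotIZ]
  push_cast
  rw [Finset.mul_sum, Finset.mul_sum, ← Finset.sum_neg_distrib, ← Finset.sum_add_distrib]
  refine Finset.sum_congr rfl fun j _ => ?_
  ring

theorem stmt_9_aux (m : ℕ) (D : ℕ)
    (p : Fin D → (Fin m → ℝ))
    (δ : Fin D → ℝ)
    (h0 : ∀ i : Fin D, ∑ j, Ktilde m (p i) (p j) * δ j = 0) :
    ∀ θ : Fin m → ℝ, ∑ j, δ j * Ktilde m (p j) θ = 0 := by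
  set T : (Fin m → ℤ) → ℂ := fun ω =>
    ∑ j, (δ j : ℂ) * Complex.exp (Complex.I * ((dotIZ ω (p j) : ℝ) : ℂ)) with hT
  have hconj : ∀ ω, (starRingEnd ℂ) (T ω) =
      ∑ j, (δ j : ℂ) * Complex.exp (-(Complex.I * ((dotIZ ω (p j) : ℝ) : ℂ))) := by
    intro ω
    rw [hT]
    rw [map_sum]
    refine Finset.sum_congr rfl fun j _ => ?_
    rw [map_mul, Complex.conj_ofReal, ← Complex.exp_conj]
    congr 2
    simp
  have hquad : ∑ ω ∈ Omega m, (3:ℂ)⁻¹ ^ m * (T ω * (starRingEnd ℂ) (T ω)) = 0 := by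
    have h1 : ∑ ω ∈ Omega m, (3:ℂ)⁻¹ ^ m * (T ω * (starRingEnd ℂ) (T ω)) =
        ∑ i, (δ i : ℂ) * ((∑ j, Ktilde m (p i) (p j) * δ j : ℝ) : ℂ) := by
      push_cast
      simp_rw [kernel_expand', hconj, hT, Finset.sum_mul_sum,
        Finset.sum_mul, Finset.mul_sum]
      rw [Finset.sum_comm]
      refine Finset.sum_congr rfl fun i _ => ?_
      rw [Finset.sum_comm]
      refine Finset.sum_congr rfl fun j _ => ?_
      refine Finset.sum_congr rfl fun ω _ => ?_
      ring
    rw [h1]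
    simp [h0]
  have hTzero : ∀ ω ∈ Omega m, T ω = 0 := by
    have h2 : ∑ ω ∈ Omega m, (3:ℝ)⁻¹ ^ m * Complex.normSq (T ω) = 0 := by
      have h := hquad
      simp_rw [Complex.mul_conj] at h
      rw [show ((3:ℂ)) = ((3:ℝ):ℂ) from by norm_num] at h
      exact_mod_cast h
    intro ω hω
    have h5 := (Finset.sum_eq_zero_iff_of_nonneg
      (fun ω _ => mul_nonneg (by positivity) (Complex.normSq_nonneg _))).mp h2 ω hω
    have h6 : Complex.normSq (T ω) = 0 := by
      have h7 : ((3:ℝ)⁻¹ ^ m) ≠ 0 := by positivity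
      exact (mul_eq_zero.mp h5).resolve_left h7
    exact Complex.normSq_eq_zero.mp h6
  intro θ
  have h6 : ((∑ j, δ j * Ktilde m (p j) θ : ℝ) : ℂ) = 0 := by
    push_cast
    simp_rw [kernel_expand', Finset.mul_sum]
    rw [Finset.sum_comm]
    refine Finset.sum_eq_zero fun ω hω => ?_
    have : ∑ j, (δ j : ℂ) * ((3:ℂ)⁻¹ ^ m *
        (Complex.exp (Complex.I * ((dotIZ ω (p j) : ℝ) : ℂ)) *
          Complex.exp (-(Complex.I * ((dotIZ ω θ : ℝ) : ℂ))))) =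
        (3:ℂ)⁻¹ ^ m * Complex.exp (-(Complex.I * ((dotIZ ω θ : ℝ) : ℂ))) * T ω := by
      rw [hT, Finset.mul_sum]
      refine Finset.sum_congr rfl fun j _ => ?_
      ring
    rw [this, hTzero ω hω, mul_zero]
  exact_mod_cast h6

theorem stmt_9 (m : ℕ) (hm : 0 < m) (D : ℕ) (hD : 0 < D)
    (p : Fin D → (Fin m → ℝ)) (g : (Fin m → ℝ) → ℝ) (hg : IsInH m g)
    (η η' : Fin D → ℝ)
    (hη : ∀ i : Fin D, ∑ j, Ktilde m (p i) (p j) * η j = g (p i))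
    (hη' : ∀ i : Fin D, ∑ j, Ktilde m (p i) (p j) * η' j = g (p i)) :
    ∀ θ : Fin m → ℝ, ∑ j, η j * Ktilde m (p j) θ = ∑ j, η' j * Ktilde m (p j) θ := by
  have h0 : ∀ i : Fin D, ∑ j, Ktilde m (p i) (p j) * (η j - η' j) = 0 := by
    intro i
    simp only [mul_sub, Finset.sum_sub_distrib, hη i, hη' i, sub_self]
  intro θ
  have h := stmt_9_aux m D p (fun j => η j - η' j) h0 θ
  simp only [sub_mul, Finset.sum_sub_distrib] at h
  linarith
end
end

section
/- (Theorem 3(iii), agreement of derivatives up to order L) Let g : ℝ^m → ℝ lie in H, let p ∈ ℝ^m, and let L be an integer with 1 ≤ L ≤ m. Let Q_L be the set of q ∈ {−2π/3, 0, 2π/3}^m with at most L non-zero entries, and define g̃ : ℝ^m → ℝ by g̃(θ) = Σ_{q ∈ Q_L} g(p + q)·K̃(p + q, θ). Then g − g̃ is smooth (C^∞) on ℝ^m and its k-th iterated Fréchet derivative at p vanishes for every k with 0 ≤ k ≤ L; equivalently, all partial derivatives ∂^α(g − g̃)(p) of total order |α| ≤ L vanish. -/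
open MeasureTheory Real Finset

noncomputable section

namespace Aux14

/-- the basic trig-poly family -/
def Gf {m : ℕ} (γ : (Fin m → ℤ) → ℂ) : (Fin m → ℝ) → ℂ :=
  fun θ => ∑ ω ∈ Omega m, γ ω * Complex.exp (Complex.I * ((dotIZ ω θ : ℝ) : ℂ))

def dotCLM {m : ℕ} (ω : Fin m → ℤ) : (Fin m → ℝ) →L[ℝ] ℂ :=
  Complex.I • (Complex.ofRealCLM.comp (∑ j, ((ω j : ℝ)) • ContinuousLinearMap.proj j))

lemma dotCLM_apply {m : ℕ} (ω : Fin m → ℤ) (θ : Fin m → ℝ) :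
    dotCLM ω θ = Complex.I * ((dotIZ ω θ : ℝ) : ℂ) := by
  simp [dotCLM, dotIZ, ContinuousLinearMap.sum_apply, smul_eq_mul]

lemma contDiff_exp_dot {m : ℕ} (ω : Fin m → ℤ) :
    ContDiff ℝ (⊤ : ℕ∞) (fun θ : Fin m → ℝ => Complex.exp (Complex.I * ((dotIZ ω θ : ℝ) : ℂ))) := by
  have : (fun θ : Fin m → ℝ => Complex.exp (Complex.I * ((dotIZ ω θ : ℝ) : ℂ)))
      = Complex.exp ∘ (dotCLM ω) := by
    funext θ; simp [Function.comp, dotCLM_apply]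
  rw [this]
  exact Complex.contDiff_exp.comp (dotCLM ω).contDiff


lemma contDiff_Gf {m : ℕ} (γ : (Fin m → ℤ) → ℂ) : ContDiff ℝ (⊤ : ℕ∞) (Gf γ) :=
  ContDiff.sum (fun ω _ => contDiff_const.mul (contDiff_exp_dot ω))

lemma dotIZ_single {m : ℕ} (ω : Fin m → ℤ) (i : Fin m) :
    dotIZ ω (Pi.single i (1:ℝ)) = (ω i : ℝ) := by
  simp [dotIZ, Pi.single_apply, mul_ite, Finset.sum_ite_eq']

lemma hasFDerivAt_exp_dot {m : ℕ} (ω : Fin m → ℤ) (x : Fin m → ℝ) :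
    HasFDerivAt (fun θ : Fin m → ℝ => Complex.exp (Complex.I * ((dotIZ ω θ : ℝ) : ℂ)))
      (Complex.exp (Complex.I * ((dotIZ ω x : ℝ) : ℂ)) • dotCLM ω) x := by
  have h1 : HasFDerivAt (fun θ : Fin m → ℝ => Complex.I * ((dotIZ ω θ : ℝ) : ℂ)) (dotCLM ω) x := by
    have := (dotCLM ω).hasFDerivAt (x := x)
    apply this.congr_of_eventuallyEq
    filter_upwards with θ using (dotCLM_apply ω θ).symm
  have hexp := ((Complex.hasDerivAt_exp (Complex.I * ((dotIZ ω x : ℝ) : ℂ))).hasFDerivAt).restrictScalars ℝ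
  have := hexp.comp x h1
  refine this.congr_fderiv ?_
  ext θ
  simp [ContinuousLinearMap.smulRight_apply]
  ring

lemma fderiv_Gf_single {m : ℕ} (γ : (Fin m → ℤ) → ℂ) (x : Fin m → ℝ) (i : Fin m) :
    fderiv ℝ (Gf γ) x (Pi.single i (1:ℝ)) = Gf (fun ω => γ ω * (Complex.I * ((ω i : ℤ) : ℂ))) x := by
  have h : HasFDerivAt (Gf γ)
      (∑ ω ∈ Omega m, γ ω • (Complex.exp (Complex.I * ((dotIZ ω x : ℝ) : ℂ)) • dotCLM ω)) x :=
    HasFDerivAt.fun_sum (fun ω _ => (hasFDerivAt_exp_dot ω x).const_mul (γ ω))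
  rw [h.fderiv]
  rw [ContinuousLinearMap.sum_apply]
  unfold Gf
  refine Finset.sum_congr rfl (fun ω _ => ?_)
  rw [ContinuousLinearMap.smul_apply, ContinuousLinearMap.smul_apply, dotCLM_apply, dotIZ_single]
  simp only [smul_eq_mul]
  push_cast
  ring

lemma iter_Gf_gen {m : ℕ} (k : ℕ) (γ : (Fin m → ℤ) → ℂ) (p : Fin m → ℝ) (jt : Fin k → Fin m)
    (v : Fin k → (Fin m → ℝ)) (hv : ∀ l, v l = Pi.single (jt l) (1:ℝ)) :
    iteratedFDeriv ℝ k (Gf γ) p v =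
      Gf (fun ω => γ ω * ∏ l, (Complex.I * ((ω (jt l) : ℤ) : ℂ))) p := by
  induction k generalizing γ with
  | zero =>
    rw [iteratedFDeriv_zero_apply]
    simp [Gf]
  | succ k ih =>
    rw [iteratedFDeriv_succ_apply_right, hv (Fin.last k)]
    have step : iteratedFDeriv ℝ k (fun y => fderiv ℝ (Gf γ) y) p (Fin.init v)
          (Pi.single (jt (Fin.last k)) (1:ℝ)) =
        iteratedFDeriv ℝ k (fun y => fderiv ℝ (Gf γ) y (Pi.single (jt (Fin.last k)) (1:ℝ))) p
          (Fin.init v) := by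
      have hccomp : (fun y => fderiv ℝ (Gf γ) y (Pi.single (jt (Fin.last k)) (1:ℝ)))
          = (ContinuousLinearMap.apply ℝ ℂ (Pi.single (jt (Fin.last k)) (1:ℝ))) ∘
            (fun y => fderiv ℝ (Gf γ) y) := rfl
      rw [hccomp, ContinuousLinearMap.iteratedFDeriv_comp_left _
        ((contDiff_Gf γ).fderiv_right (m := (⊤ : ℕ∞)) (by exact_mod_cast le_top)).contDiffAt
          (by exact_mod_cast le_top)]
      simp
    rw [step]
    have heq : (fun y => fderiv ℝ (Gf γ) y (Pi.single (jt (Fin.last k)) (1:ℝ)))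
        = Gf (fun ω => γ ω * (Complex.I * ((ω (jt (Fin.last k)) : ℤ) : ℂ))) := by
      funext y; exact fderiv_Gf_single γ y (jt (Fin.last k))
    rw [heq, ih _ (jt ∘ Fin.castSucc) (Fin.init v) (fun l => hv (Fin.castSucc l))]
    unfold Gf
    refine Finset.sum_congr rfl (fun ω _ => ?_)
    simp only [Fin.prod_univ_castSucc, Function.comp]
    ring


lemma mem_Omega {m : ℕ} {ω : Fin m → ℤ} : ω ∈ Omega m ↔ ∀ i, ω i ∈ Finset.Icc (-1 : ℤ) 1 := by
  simp [Omega, Finset.mem_Icc, Pi.le_def, forall_and]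

lemma Omega_eq_piFinset {m : ℕ} :
    Omega m = Fintype.piFinset (fun _ : Fin m => Finset.Icc (-1 : ℤ) 1) := by
  ext ω
  simp [mem_Omega, Fintype.mem_piFinset]

lemma sum_omega_prod {m : ℕ} (f : Fin m → ℤ → ℂ) :
    ∑ ω ∈ Omega m, ∏ i, f i (ω i) = ∏ i, ∑ w ∈ Finset.Icc (-1 : ℤ) 1, f i w := by
  rw [Omega_eq_piFinset, ← Finset.prod_univ_sum]

def e3 (d : ℤ) : ℂ := Complex.exp (Complex.I * ((2 * π / 3 * (d : ℝ) : ℝ) : ℂ))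

lemma e3_add (a b : ℤ) : e3 (a + b) = e3 a * e3 b := by
  rw [e3, e3, e3, ← Complex.exp_add]
  congr 1
  push_cast
  ring

lemma e3_zero : e3 0 = 1 := by simp [e3]

lemma e3_sum {m : ℕ} (f : Fin m → ℤ) : e3 (∑ i, f i) = ∏ i, e3 (f i) := by
  classical
  induction (Finset.univ : Finset (Fin m)) using Finset.induction with
  | empty => simp [e3_zero]
  | insert _ _ h ih => rw [Finset.sum_insert h, Finset.prod_insert h, e3_add, ih]

lemma cos_2pi3 : Real.cos (2 * π / 3) = -(1/2) := by
  have h : 2 * π / 3 = π - π / 3 := by ring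
  rw [h, Real.cos_pi_sub, Real.cos_pi_div_three]

lemma cos_4pi3 : Real.cos (2 * π / 3 * 2) = -(1/2) := by
  have h : 2 * π / 3 * 2 = 2 * π - 2 * π / 3 := by ring
  rw [h, Real.cos_two_pi_sub, cos_2pi3]

lemma e3_add_e3_neg (d : ℤ) : e3 d + e3 (-d) = ((2 * Real.cos (2 * π / 3 * (d:ℝ)) : ℝ) : ℂ) := by
  rw [e3, e3]
  rw [mul_comm Complex.I, mul_comm Complex.I, Complex.exp_mul_I, Complex.exp_mul_I]
  push_cast
  simp [Complex.cos_neg, Complex.sin_neg, ← Complex.ofReal_cos]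
  ring

lemma sum3 (d : ℤ) (h1 : -2 ≤ d) (h2 : d ≤ 2) :
    ∑ n ∈ Finset.Icc (-1 : ℤ) 1, e3 (d * n) = if d = 0 then 3 else 0 := by
  have hicc : Finset.Icc (-1 : ℤ) 1 = {-1, 0, 1} := by decide
  rw [hicc]
  rw [show ({-1, 0, 1} : Finset ℤ) = insert (-1 : ℤ) {0, 1} from rfl]
  rw [Finset.sum_insert (by decide), Finset.sum_insert (by decide), Finset.sum_singleton]
  have key : e3 (d * -1) + (e3 (d * 0) + e3 (d * 1)) =
      1 + ((2 * Real.cos (2 * π / 3 * (d:ℝ)) : ℝ) : ℂ) := by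
    rw [mul_zero, e3_zero, mul_one, show d * -1 = -d by ring, ← e3_add_e3_neg]
    ring
  rw [key]
  interval_cases d
  · rw [show ((-2 : ℤ) : ℝ) = -2 by push_cast; ring]
    rw [show (2 * π / 3 * (-2:ℝ)) = -(2 * π / 3 * 2) by ring, Real.cos_neg, cos_4pi3]
    norm_num
  · rw [show ((-1 : ℤ) : ℝ) = -1 by push_cast; ring]
    rw [show (2 * π / 3 * (-1:ℝ)) = -(2 * π / 3) by ring, Real.cos_neg, cos_2pi3]
    norm_num
  · norm_num
  · rw [show ((1 : ℤ) : ℝ) = 1 by push_cast; ring, mul_one, cos_2pi3]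
    norm_num
  · rw [show ((2 : ℤ) : ℝ) = 2 by push_cast; ring, cos_4pi3]
    norm_num

lemma prod_tuple {m k : ℕ} (F : Fin m → ℂ) (jt : Fin k → Fin m) :
    ∏ l, F (jt l) = ∏ i, F i ^ (Finset.univ.filter (fun l => jt l = i)).card := by
  rw [← Finset.prod_fiberwise_of_maps_to (g := jt) (t := Finset.univ)
    (fun x _ => Finset.mem_univ _) (fun l => F (jt l))]
  refine Finset.prod_congr rfl (fun i _ => ?_)
  rw [Finset.prod_congr rfl (fun l hl => by rw [(Finset.mem_filter.mp hl).2]),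
    Finset.prod_const]

def qv {m : ℕ} (ν : Fin m → ℤ) : Fin m → ℝ := fun i => 2 * π / 3 * (ν i : ℝ)

def OmegaL (m L : ℕ) : Finset (Fin m → ℤ) :=
  (Omega m).filter (fun ν => (Finset.univ.filter (fun i => ν i ≠ 0)).card ≤ L)

lemma dot_qv {m : ℕ} (ω ν : Fin m → ℤ) (p : Fin m → ℝ) :
    dotIZ ω (p + qv ν) = dotIZ ω p + 2 * π / 3 * ((∑ i, ω i * ν i : ℤ) : ℝ) := by
  have h : ∀ i, (ω i : ℝ) * ((p + qv ν) i) = (ω i : ℝ) * p i + 2 * π / 3 * ((ω i * ν i : ℤ) : ℝ) := by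
    intro i
    simp only [Pi.add_apply, qv]
    push_cast
    ring
  rw [dotIZ, Finset.sum_congr rfl (fun i _ => h i), Finset.sum_add_distrib, ← dotIZ, ← Finset.mul_sum]
  push_cast
  ring

lemma Tlemma {m L k : ℕ} (hkL : k ≤ L) (jt : Fin k → Fin m) (μ : Fin m → ℤ) (hμ : μ ∈ Omega m) :
    (∑ ν ∈ OmegaL m L, ∑ ω ∈ Omega m,
        (∏ l, ((ω (jt l) : ℤ) : ℂ)) * e3 (∑ i, (μ i - ω i) * ν i))
      = 3^m * ∏ l, ((μ (jt l) : ℤ) : ℂ) := by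
  set α : Fin m → ℕ := fun i => (Finset.univ.filter (fun l => jt l = i)).card with hα
  have hWfact : ∀ ν : Fin m → ℤ,
      (∑ ω ∈ Omega m, (∏ l, ((ω (jt l) : ℤ) : ℂ)) * e3 (∑ i, (μ i - ω i) * ν i))
        = ∏ i, ∑ w ∈ Finset.Icc (-1 : ℤ) 1, ((w : ℤ) : ℂ)^(α i) * e3 ((μ i - w) * ν i) := by
    intro ν
    rw [← sum_omega_prod]
    refine Finset.sum_congr rfl (fun ω _ => ?_)
    rw [prod_tuple (fun i => ((ω i : ℤ) : ℂ)) jt, e3_sum (fun i => (μ i - ω i) * ν i),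
      ← Finset.prod_mul_distrib]
  have hvanish : ∀ ν ∈ Omega m, ¬((Finset.univ.filter (fun i => ν i ≠ 0)).card ≤ L) →
      (∑ ω ∈ Omega m, (∏ l, ((ω (jt l) : ℤ) : ℂ)) * e3 (∑ i, (μ i - ω i) * ν i)) = 0 := by
    intro ν hν hcard
    obtain ⟨i, hνi, hαi⟩ : ∃ i, ν i ≠ 0 ∧ α i = 0 := by
      by_contra hcon
      push_neg at hcon
      apply hcard
      calc (Finset.univ.filter (fun i => ν i ≠ 0)).card
          ≤ (Finset.univ.image jt).card := by
            apply Finset.card_le_card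
            intro i hi
            have hi' := (Finset.mem_filter.mp hi).2
            have hne := hcon i hi'
            rw [hα] at hne
            obtain ⟨l, hl⟩ := Finset.card_pos.mp (Nat.pos_of_ne_zero hne)
            exact Finset.mem_image.mpr ⟨l, Finset.mem_univ l, (Finset.mem_filter.mp hl).2⟩
        _ ≤ k := by simpa using Finset.card_image_le (s := Finset.univ) (f := jt)
        _ ≤ L := hkL
    rw [hWfact ν]
    apply Finset.prod_eq_zero (Finset.mem_univ i)
    rw [hαi]
    simp only [pow_zero, one_mul]
    have hsplit : ∀ w ∈ Finset.Icc (-1 : ℤ) 1,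
        e3 ((μ i - w) * ν i) = e3 (μ i * ν i) * e3 ((-(ν i)) * w) := by
      intro w _
      rw [← e3_add]
      congr 1
      ring
    rw [Finset.sum_congr rfl hsplit, ← Finset.mul_sum]
    have hbound := mem_Omega.mp hν i
    rw [Finset.mem_Icc] at hbound
    rw [sum3 (-(ν i)) (by omega) (by omega), if_neg (by omega), mul_zero]
  have hext : (∑ ν ∈ OmegaL m L, ∑ ω ∈ Omega m,
        (∏ l, ((ω (jt l) : ℤ) : ℂ)) * e3 (∑ i, (μ i - ω i) * ν i))
      = ∑ ν ∈ Omega m, ∑ ω ∈ Omega m,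
        (∏ l, ((ω (jt l) : ℤ) : ℂ)) * e3 (∑ i, (μ i - ω i) * ν i) := by
    apply Finset.sum_subset (Finset.filter_subset _ _)
    intro ν hν hnot
    refine hvanish ν hν ?_
    intro hle
    exact hnot (Finset.mem_filter.mpr ⟨hν, hle⟩)
  rw [hext, Finset.sum_congr rfl (fun ν _ => hWfact ν), sum_omega_prod
    (fun i n => ∑ w ∈ Finset.Icc (-1 : ℤ) 1, ((w : ℤ) : ℂ)^(α i) * e3 ((μ i - w) * n))]
  have hper : ∀ i, (∑ n ∈ Finset.Icc (-1 : ℤ) 1, ∑ w ∈ Finset.Icc (-1 : ℤ) 1,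
      ((w : ℤ) : ℂ)^(α i) * e3 ((μ i - w) * n)) = ((μ i : ℤ) : ℂ)^(α i) * 3 := by
    intro i
    rw [Finset.sum_comm]
    have hbμ := mem_Omega.mp hμ i
    rw [Finset.mem_Icc] at hbμ
    have hone : ∀ w ∈ Finset.Icc (-1 : ℤ) 1,
        (∑ n ∈ Finset.Icc (-1 : ℤ) 1, ((w : ℤ) : ℂ)^(α i) * e3 ((μ i - w) * n))
          = if w = μ i then ((μ i : ℤ) : ℂ)^(α i) * 3 else 0 := by
      intro w hw
      rw [Finset.mem_Icc] at hw
      rw [← Finset.mul_sum, sum3 (μ i - w) (by omega) (by omega)]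
      by_cases hwμ : w = μ i
      · rw [if_pos (by omega), if_pos hwμ, hwμ]
      · rw [if_neg (by omega), if_neg hwμ, mul_zero]
    rw [Finset.sum_congr rfl hone, Finset.sum_ite_eq' (Finset.Icc (-1 : ℤ) 1) (μ i)
      (fun _ => ((μ i : ℤ) : ℂ)^(α i) * 3), if_pos (Finset.mem_Icc.mpr ⟨hbμ.1, hbμ.2⟩)]
  rw [Finset.prod_congr rfl (fun i _ => hper i), Finset.prod_mul_distrib, Finset.prod_const,
    prod_tuple (fun i => ((μ i : ℤ) : ℂ)) jt]
  rw [Finset.card_univ, Fintype.card_fin]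
  ring

lemma key {m L : ℕ} (c : (Fin m → ℤ) → ℂ) (g : (Fin m → ℝ) → ℝ)
    (hz : ∀ z : Fin m → ℝ, ((g z : ℝ) : ℂ) =
      ∑ ω ∈ Omega m, c ω * Complex.exp (Complex.I * ((dotIZ ω z : ℝ) : ℂ)))
    (p : Fin m → ℝ) {k : ℕ} (hkL : k ≤ L) (jt : Fin k → Fin m) :
    ∑ ω ∈ Omega m,
      ((c ω - (1/3 : ℂ)^m * ∑ ν ∈ OmegaL m L, ((g (p + qv ν) : ℝ) : ℂ) *
          Complex.exp (-(Complex.I * ((dotIZ ω (p + qv ν) : ℝ) : ℂ)))) *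
        ∏ l, ((ω (jt l) : ℤ) : ℂ)) * Complex.exp (Complex.I * ((dotIZ ω p : ℝ) : ℂ)) = 0 := by
  have h1 : ∀ ω ∈ Omega m,
      ((c ω - (1/3 : ℂ)^m * ∑ ν ∈ OmegaL m L, ((g (p + qv ν) : ℝ) : ℂ) *
          Complex.exp (-(Complex.I * ((dotIZ ω (p + qv ν) : ℝ) : ℂ)))) *
        ∏ l, ((ω (jt l) : ℤ) : ℂ)) * Complex.exp (Complex.I * ((dotIZ ω p : ℝ) : ℂ))
      = (c ω * (∏ l, ((ω (jt l) : ℤ) : ℂ))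
            * Complex.exp (Complex.I * ((dotIZ ω p : ℝ) : ℂ)))
        - (1/3 : ℂ)^m * ∑ ν ∈ OmegaL m L, ((g (p + qv ν) : ℝ) : ℂ) *
            (Complex.exp (-(Complex.I * ((dotIZ ω (p + qv ν) : ℝ) : ℂ)))
              * Complex.exp (Complex.I * ((dotIZ ω p : ℝ) : ℂ)))
            * (∏ l, ((ω (jt l) : ℤ) : ℂ)) := by
    intro ω _
    rw [sub_mul, sub_mul, mul_assoc ((1/3 : ℂ)^m), Finset.sum_mul, mul_assoc ((1/3 : ℂ)^m),
      Finset.sum_mul]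
    congr 2
    refine Finset.sum_congr rfl (fun ν _ => by ring)
  rw [Finset.sum_congr rfl h1, Finset.sum_sub_distrib, sub_eq_zero]
  -- Eq1 : exponential collapse
  have hEq1 : ∀ (ω ν : Fin m → ℤ),
      Complex.exp (-(Complex.I * ((dotIZ ω (p + qv ν) : ℝ) : ℂ)))
        * Complex.exp (Complex.I * ((dotIZ ω p : ℝ) : ℂ)) = e3 (-(∑ i, ω i * ν i)) := by
    intro ω ν
    rw [← Complex.exp_add, e3]
    congr 1
    rw [dot_qv]
    push_cast
    ring
  -- rewrite the subtracted side
  have h2 : ∀ ω ∈ Omega m,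
      (1/3 : ℂ)^m * ∑ ν ∈ OmegaL m L, ((g (p + qv ν) : ℝ) : ℂ) *
          (Complex.exp (-(Complex.I * ((dotIZ ω (p + qv ν) : ℝ) : ℂ)))
            * Complex.exp (Complex.I * ((dotIZ ω p : ℝ) : ℂ)))
          * (∏ l, ((ω (jt l) : ℤ) : ℂ))
      = (1/3 : ℂ)^m * ∑ ν ∈ OmegaL m L, ((g (p + qv ν) : ℝ) : ℂ) *
          ((∏ l, ((ω (jt l) : ℤ) : ℂ)) * e3 (-(∑ i, ω i * ν i))) := by
    intro ω _
    congr 1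
    refine Finset.sum_congr rfl (fun ν _ => ?_)
    rw [hEq1 ω ν]
    ring
  rw [Finset.sum_congr rfl h2, ← Finset.mul_sum, Finset.sum_comm]
  -- substitute the Fourier expansion of g at the grid points
  have hg' : ∀ ν : Fin m → ℤ, ((g (p + qv ν) : ℝ) : ℂ)
      = ∑ μ ∈ Omega m, (c μ * Complex.exp (Complex.I * ((dotIZ μ p : ℝ) : ℂ)))
          * e3 (∑ i, μ i * ν i) := by
    intro ν
    rw [hz (p + qv ν)]
    refine Finset.sum_congr rfl (fun μ _ => ?_)
    rw [mul_assoc]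
    congr 1
    rw [e3, ← Complex.exp_add]
    congr 1
    rw [dot_qv]
    push_cast
    ring
  have h3 : ∀ ν ∈ OmegaL m L,
      (∑ ω ∈ Omega m, ((g (p + qv ν) : ℝ) : ℂ) *
          ((∏ l, ((ω (jt l) : ℤ) : ℂ)) * e3 (-(∑ i, ω i * ν i))))
      = ∑ μ ∈ Omega m, (c μ * Complex.exp (Complex.I * ((dotIZ μ p : ℝ) : ℂ)))
          * ∑ ω ∈ Omega m, (∏ l, ((ω (jt l) : ℤ) : ℂ)) * e3 (∑ i, (μ i - ω i) * ν i) := by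
    intro ν _
    rw [← Finset.mul_sum, hg' ν, Finset.sum_mul]
    refine Finset.sum_congr rfl (fun μ _ => ?_)
    rw [mul_assoc, Finset.mul_sum]
    congr 1
    refine Finset.sum_congr rfl (fun ω _ => ?_)
    rw [← mul_assoc, mul_comm (e3 (∑ i, μ i * ν i)), mul_assoc, ← e3_add]
    congr 2
    have hii : ∀ i : Fin m, (μ i - ω i) * ν i = μ i * ν i + -(ω i * ν i) := fun i => by ring
    rw [Finset.sum_congr rfl (fun i _ => hii i), Finset.sum_add_distrib, Finset.sum_neg_distrib]
  rw [Finset.sum_congr rfl h3, Finset.sum_comm]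
  have h4 : ∀ μ ∈ Omega m,
      (∑ ν ∈ OmegaL m L, (c μ * Complex.exp (Complex.I * ((dotIZ μ p : ℝ) : ℂ)))
          * ∑ ω ∈ Omega m, (∏ l, ((ω (jt l) : ℤ) : ℂ)) * e3 (∑ i, (μ i - ω i) * ν i))
      = (c μ * Complex.exp (Complex.I * ((dotIZ μ p : ℝ) : ℂ))) * (3^m * ∏ l, ((μ (jt l) : ℤ) : ℂ)) := by
    intro μ hμ
    rw [← Finset.mul_sum, Tlemma hkL jt μ hμ]
  rw [Finset.sum_congr rfl h4, Finset.mul_sum]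
  refine Finset.sum_congr rfl (fun μ _ => ?_)
  have h35 : (1/3 : ℂ)^m * 3^m = 1 := by
    rw [← mul_pow]
    norm_num
  calc c μ * (∏ l, ((μ (jt l) : ℤ) : ℂ)) * Complex.exp (Complex.I * ((dotIZ μ p : ℝ) : ℂ))
      = ((1/3 : ℂ)^m * 3^m) * (c μ * (∏ l, ((μ (jt l) : ℤ) : ℂ))
          * Complex.exp (Complex.I * ((dotIZ μ p : ℝ) : ℂ))) := by rw [h35, one_mul]
    _ = (1/3 : ℂ)^m * (c μ * Complex.exp (Complex.I * ((dotIZ μ p : ℝ) : ℂ))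
          * (3^m * ∏ l, ((μ (jt l) : ℤ) : ℂ))) := by ring

lemma exp_add_exp_neg (s : ℝ) :
    Complex.exp (Complex.I * ((s : ℝ) : ℂ)) + Complex.exp (Complex.I * ((-s : ℝ) : ℂ))
      = ((2 * Real.cos s : ℝ) : ℂ) := by
  rw [mul_comm Complex.I, mul_comm Complex.I, Complex.exp_mul_I, Complex.exp_mul_I]
  push_cast
  simp [Complex.cos_neg, Complex.sin_neg, ← Complex.ofReal_cos]
  ring

lemma Kexp {m : ℕ} (x θ : Fin m → ℝ) :
    ((Ktilde m x θ : ℝ) : ℂ) = (1/3 : ℂ)^m * ∑ ω ∈ Omega m,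
      Complex.exp (-(Complex.I * ((dotIZ ω x : ℝ) : ℂ)))
        * Complex.exp (Complex.I * ((dotIZ ω θ : ℝ) : ℂ)) := by
  have hper : ∀ ω : Fin m → ℤ,
      Complex.exp (-(Complex.I * ((dotIZ ω x : ℝ) : ℂ)))
          * Complex.exp (Complex.I * ((dotIZ ω θ : ℝ) : ℂ))
        = ∏ j, Complex.exp (Complex.I * (((ω j : ℝ) * (θ j - x j) : ℝ) : ℂ)) := by
    intro ω
    rw [← Complex.exp_add, ← Complex.exp_sum]
    congr 1
    unfold dotIZ
    push_cast
    rw [Finset.mul_sum, Finset.mul_sum, ← Finset.sum_neg_distrib, ← Finset.sum_add_distrib]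
    exact Finset.sum_congr rfl (fun j _ => by ring)
  rw [Finset.sum_congr rfl (fun ω _ => hper ω)]
  rw [sum_omega_prod (fun j w => Complex.exp (Complex.I * (((w : ℝ) * (θ j - x j) : ℝ) : ℂ)))]
  have hj : ∀ j, (∑ w ∈ Finset.Icc (-1 : ℤ) 1,
      Complex.exp (Complex.I * (((w : ℝ) * (θ j - x j) : ℝ) : ℂ)))
        = ((1 + 2 * Real.cos (x j - θ j) : ℝ) : ℂ) := by
    intro j
    have hicc : Finset.Icc (-1 : ℤ) 1 = {-1, 0, 1} := by decide
    rw [hicc, show ({-1, 0, 1} : Finset ℤ) = insert (-1 : ℤ) {0, 1} from rfl,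
      Finset.sum_insert (by decide), Finset.sum_insert (by decide), Finset.sum_singleton]
    have e1 : ((((1 : ℤ) : ℝ) * (θ j - x j) : ℝ) : ℂ) = (((θ j - x j : ℝ)) : ℂ) := by push_cast; ring
    have e0 : ((((0 : ℤ) : ℝ) * (θ j - x j) : ℝ) : ℂ) = ((0 : ℝ) : ℂ) := by push_cast; ring
    have em : ((((-1 : ℤ) : ℝ) * (θ j - x j) : ℝ) : ℂ) = ((-(θ j - x j) : ℝ) : ℂ) := by push_cast; ring
    rw [e1, e0, em]
    have := exp_add_exp_neg (θ j - x j)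
    rw [show Real.cos (x j - θ j) = Real.cos (θ j - x j) by rw [← Real.cos_neg]; ring_nf]
    push_cast
    simp only [Complex.ofReal_zero, mul_zero, Complex.exp_zero]
    push_cast at this
    rw [show Complex.I * -((θ j:ℂ) - (x j:ℂ)) = Complex.I * ((-(θ j - x j) : ℝ) : ℂ) by push_cast; ring,
      show Complex.I * ((θ j:ℂ) - (x j:ℂ)) = Complex.I * (((θ j - x j : ℝ)) : ℂ) by push_cast; ring]
    rw [show Complex.exp (Complex.I * ((-(θ j - x j):ℝ):ℂ)) + (1 + Complex.exp (Complex.I * (((θ j - x j : ℝ)):ℂ)))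
        = 1 + (Complex.exp (Complex.I * (((θ j - x j:ℝ)):ℂ)) + Complex.exp (Complex.I * ((-(θ j - x j):ℝ):ℂ))) by ring,
      exp_add_exp_neg (θ j - x j)]
    push_cast
    ring
  rw [Finset.prod_congr rfl (fun j _ => hj j)]
  unfold Ktilde
  push_cast
  rw [Finset.prod_div_distrib, Finset.prod_const, Finset.card_univ, Fintype.card_fin]
  rw [div_eq_mul_inv, mul_comm, one_div, inv_pow]

lemma QgridL_eq {m L : ℕ} : QgridL m L = (OmegaL m L).image qv := by
  unfold QgridL OmegaL
  rw [show Qgrid m = (Omega m).image qv from rfl, Finset.filter_image]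
  congr 1
  apply Finset.filter_congr
  intro ν _
  have hfil : (Finset.univ.filter (fun j => qv ν j ≠ 0))
      = (Finset.univ.filter (fun j => ν j ≠ 0)) := by
    apply Finset.filter_congr
    intro j _
    have hpi : (2 * π / 3 : ℝ) ≠ 0 := by positivity
    simp [qv, mul_eq_zero, hpi]
  rw [hfil]

lemma sum_QgridL {M : Type*} [AddCommMonoid M] {m L : ℕ} (F : (Fin m → ℝ) → M) :
    ∑ q ∈ QgridL m L, F q = ∑ ν ∈ OmegaL m L, F (qv ν) := by
  rw [QgridL_eq]
  apply Finset.sum_image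
  intro x _ y _ hxy
  funext i
  have := congrFun hxy i
  have hpi : (2 * π / 3 : ℝ) ≠ 0 := by positivity
  have : ((x i : ℝ)) = ((y i : ℝ)) := by
    unfold qv at this
    exact mul_left_cancel₀ hpi this
  exact_mod_cast this

lemma repr {m L : ℕ} (c : (Fin m → ℤ) → ℂ) (g : (Fin m → ℝ) → ℝ)
    (hz : ∀ z : Fin m → ℝ, ((g z : ℝ) : ℂ) =
      ∑ ω ∈ Omega m, c ω * Complex.exp (Complex.I * ((dotIZ ω z : ℝ) : ℂ)))
    (p : Fin m → ℝ) (θ : Fin m → ℝ) :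
    ((g θ - ∑ q ∈ QgridL m L, g (p + q) * Ktilde m (p + q) θ : ℝ) : ℂ)
      = Gf (fun ω => c ω - (1/3 : ℂ)^m * ∑ ν ∈ OmegaL m L, ((g (p + qv ν) : ℝ) : ℂ) *
          Complex.exp (-(Complex.I * ((dotIZ ω (p + qv ν) : ℝ) : ℂ)))) θ := by
  push_cast
  unfold Gf
  have hsplit : ∀ ω ∈ Omega m,
      (c ω - (1/3 : ℂ)^m * ∑ ν ∈ OmegaL m L, ((g (p + qv ν) : ℝ) : ℂ) *
          Complex.exp (-(Complex.I * ((dotIZ ω (p + qv ν) : ℝ) : ℂ))))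
        * Complex.exp (Complex.I * ((dotIZ ω θ : ℝ) : ℂ))
      = c ω * Complex.exp (Complex.I * ((dotIZ ω θ : ℝ) : ℂ))
        - ((1/3 : ℂ)^m * ∑ ν ∈ OmegaL m L, ((g (p + qv ν) : ℝ) : ℂ) *
            Complex.exp (-(Complex.I * ((dotIZ ω (p + qv ν) : ℝ) : ℂ))))
          * Complex.exp (Complex.I * ((dotIZ ω θ : ℝ) : ℂ)) :=
    fun ω _ => sub_mul _ _ _
  rw [Finset.sum_congr rfl hsplit, Finset.sum_sub_distrib, ← hz θ]
  congr 1
  rw [sum_QgridL (fun q => ((g (p + q) : ℝ) : ℂ) * ((Ktilde m (p + q) θ : ℝ) : ℂ))]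
  have h2 : ∀ ω ∈ Omega m,
      ((1/3 : ℂ)^m * ∑ ν ∈ OmegaL m L, ((g (p + qv ν) : ℝ) : ℂ) *
          Complex.exp (-(Complex.I * ((dotIZ ω (p + qv ν) : ℝ) : ℂ))))
        * Complex.exp (Complex.I * ((dotIZ ω θ : ℝ) : ℂ))
      = ∑ ν ∈ OmegaL m L, (1/3 : ℂ)^m * (((g (p + qv ν) : ℝ) : ℂ) *
          (Complex.exp (-(Complex.I * ((dotIZ ω (p + qv ν) : ℝ) : ℂ)))
            * Complex.exp (Complex.I * ((dotIZ ω θ : ℝ) : ℂ)))) := by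
    intro ω _
    rw [mul_assoc, Finset.sum_mul, Finset.mul_sum]
    exact Finset.sum_congr rfl (fun ν _ => by ring)
  rw [Finset.sum_congr rfl h2, Finset.sum_comm]
  refine Finset.sum_congr rfl (fun ν _ => ?_)
  rw [Kexp (p + qv ν) θ, Finset.mul_sum, Finset.mul_sum]
  exact Finset.sum_congr rfl (fun ω _ => by ring)


end Aux14

theorem stmt_14 (m : ℕ) (g : (Fin m → ℝ) → ℝ) (hg : IsInH m g)
    (p : Fin m → ℝ) (L : ℕ) (hL : 1 ≤ L) (hLm : L ≤ m) :
    ContDiff ℝ (⊤ : ℕ∞) (fun θ => g θ - ∑ q ∈ QgridL m L, g (p + q) * Ktilde m (p + q) θ) ∧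
    ∀ k : ℕ, k ≤ L →
      iteratedFDeriv ℝ k
        (fun θ => g θ - ∑ q ∈ QgridL m L, g (p + q) * Ktilde m (p + q) θ) p = 0 := by
  classical
  obtain ⟨c, -, hz⟩ := hg
  set B : (Fin m → ℤ) → ℂ := fun ω => c ω - (1/3 : ℂ)^m * ∑ ν ∈ Aux14.OmegaL m L,
      ((g (p + Aux14.qv ν) : ℝ) : ℂ) *
        Complex.exp (-(Complex.I * ((dotIZ ω (p + Aux14.qv ν) : ℝ) : ℂ))) with hB
  have hfun : (fun θ => g θ - ∑ q ∈ QgridL m L, g (p + q) * Ktilde m (p + q) θ)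
      = fun θ => (Aux14.Gf B θ).re := by
    funext θ
    have h1 : Aux14.Gf B θ = ((g θ - ∑ q ∈ QgridL m L, g (p + q) * Ktilde m (p + q) θ : ℝ) : ℂ) := by
      simp only [hB]
      exact (Aux14.repr c g hz p θ).symm
    rw [h1, Complex.ofReal_re]
  have hcomp : (fun θ => (Aux14.Gf B θ).re) = ⇑Complex.reCLM ∘ (Aux14.Gf B) := by
    funext θ; simp
  have hzero : ∀ k : ℕ, k ≤ L → iteratedFDeriv ℝ k (Aux14.Gf B) p = 0 := by
    intro k hk
    have h0 : ∀ r : Fin k → Fin m,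
        (iteratedFDeriv ℝ k (Aux14.Gf B) p) (fun l => Pi.single (r l) (1:ℝ)) = 0 := by
      intro r
      rw [Aux14.iter_Gf_gen k B p r _ (fun l => rfl)]
      have hkey := Aux14.key (L := L) c g hz p hk r
      simp only [Aux14.Gf]
      have hsc : ∀ ω ∈ Omega m,
          (B ω * ∏ l, (Complex.I * ((ω (r l) : ℤ) : ℂ)))
              * Complex.exp (Complex.I * ((dotIZ ω p : ℝ) : ℂ))
          = Complex.I^k * ((B ω * ∏ l, ((ω (r l) : ℤ) : ℂ))
              * Complex.exp (Complex.I * ((dotIZ ω p : ℝ) : ℂ))) := by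
        intro ω _
        rw [Finset.prod_mul_distrib, Finset.prod_const, Finset.card_univ, Fintype.card_fin]
        ring
      rw [Finset.sum_congr rfl hsc, ← Finset.mul_sum]
      rw [show (∑ ω ∈ Omega m, (B ω * ∏ l, ((ω (r l) : ℤ) : ℂ))
          * Complex.exp (Complex.I * ((dotIZ ω p : ℝ) : ℂ))) = 0 from by
        simp only [hB]; exact hkey]
      rw [mul_zero]
    ext v
    have hv : ∀ l, v l = ∑ i, v l i • (Pi.single i (1:ℝ) : Fin m → ℝ) := by
      intro l
      conv_lhs => rw [← Finset.univ_sum_single (v l)]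
      refine Finset.sum_congr rfl (fun i _ => ?_)
      funext j
      simp [Pi.single_apply, mul_ite]
    have hterm : ∀ r : Fin k → Fin m,
        (iteratedFDeriv ℝ k (Aux14.Gf B) p).toMultilinearMap
          (fun l => v l (r l) • (Pi.single (r l) (1:ℝ) : Fin m → ℝ)) = 0 := by
      intro r
      rw [MultilinearMap.map_smul_univ]
      have : (iteratedFDeriv ℝ k (Aux14.Gf B) p).toMultilinearMap
          (fun l => Pi.single (r l) (1:ℝ))
        = (iteratedFDeriv ℝ k (Aux14.Gf B) p) (fun l => Pi.single (r l) (1:ℝ)) := rfl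
      rw [this, h0 r, smul_zero]
    have hexpand : (iteratedFDeriv ℝ k (Aux14.Gf B) p) v
        = ∑ r : Fin k → Fin m, (iteratedFDeriv ℝ k (Aux14.Gf B) p).toMultilinearMap
            (fun l => v l (r l) • (Pi.single (r l) (1:ℝ) : Fin m → ℝ)) := by
      have hv' : v = fun l => ∑ i, v l i • (Pi.single i (1:ℝ) : Fin m → ℝ) := funext hv
      conv_lhs => rw [hv']
      exact (iteratedFDeriv ℝ k (Aux14.Gf B) p).toMultilinearMap.map_sum
        (g := fun l i => v l i • (Pi.single i (1:ℝ) : Fin m → ℝ))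
    rw [hexpand, Finset.sum_congr rfl (fun r _ => hterm r), Finset.sum_const_zero]
    simp
  constructor
  · rw [hfun, hcomp]
    exact Complex.reCLM.contDiff.comp (Aux14.contDiff_Gf B)
  · intro k hk
    rw [hfun, hcomp,
      Complex.reCLM.iteratedFDeriv_comp_left (Aux14.contDiff_Gf B).contDiffAt (by exact_mod_cast le_top), hzero k hk]
    ext v
    simp
end
end

section
/- (Single-parameter trigonometric structure of expectation values) Let N be a positive integer, let M and G be N×N complex matrices with M Hermitian (Mᴴ = M), G Hermitian, and G·G = 1, and let v ∈ ℂ^N. For x ∈ ℝ set ψ(x) = exp(−(i·x/2)·G)·v (matrix exponential applied to v). Then there exist real numbers a, b, c such that for every x ∈ ℝ, star(ψ(x)) ⬝ᵥ (M.mulVec ψ(x)) = a + b·cos(x) + c·sin(x) (equality in ℂ, with the real right-hand side coerced). -/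
/-!
Since `G * G = 1`, the even and odd parts of the exponential series give
`exp (-(i x/2) G) = cos (x/2) - i sin (x/2) G`, so `ψ(x) = cos (x/2) v - i sin (x/2) G v`.
For Hermitian `M` the expectation value is then the real quadratic form
`cos² (x/2) ⟨v, M v⟩ + sin² (x/2) ⟨Gv, M Gv⟩ + 2 cos (x/2) sin (x/2) Im ⟨v, M Gv⟩`,
and the half-angle formulas turn it into `a + b cos x + c sin x`.
-/

open Matrix

section Involution

variable {𝔸 : Type*} [Ring 𝔸] [Algebra ℂ 𝔸] [TopologicalSpace 𝔸] [IsTopologicalRing 𝔸]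
  [ContinuousSMul ℂ 𝔸] [T2Space 𝔸] {g : 𝔸}

theorem NormedSpace.exp_smul_of_mul_self_eq_one (hg : g * g = 1) (z : ℂ) :
    NormedSpace.exp (z • g) = Complex.cosh z • (1 : 𝔸) + Complex.sinh z • g := by
  have hsq : g ^ 2 = 1 := by rw [sq, hg]
  rw [NormedSpace.exp_eq_tsum ℂ]
  refine HasSum.tsum_eq (HasSum.even_add_odd ?_ ?_)
  · convert (Complex.hasSum_cosh z).smul_const (1 : 𝔸) using 2 with k
    rw [smul_pow, pow_mul g, hsq, one_pow, smul_smul, div_eq_inv_mul]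
  · convert (Complex.hasSum_sinh z).smul_const g using 2 with k
    rw [smul_pow, pow_succ g, pow_mul g, hsq, one_pow, one_mul, smul_smul, div_eq_inv_mul]

theorem NormedSpace.exp_neg_I_mul_smul_of_mul_self_eq_one (hg : g * g = 1) (θ : ℂ) :
    NormedSpace.exp ((-(Complex.I * θ)) • g) =
      Complex.cos θ • (1 : 𝔸) - (Complex.sin θ * Complex.I) • g := by
  rw [NormedSpace.exp_smul_of_mul_self_eq_one hg, Complex.cosh_neg, Complex.sinh_neg,
    mul_comm, Complex.cosh_mul_I, Complex.sinh_mul_I, neg_smul, sub_eq_add_neg]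

end Involution

theorem Matrix.IsHermitian.star_dotProduct_mulVec_comm {n α : Type*} [Fintype n]
    [CommSemiring α] [StarRing α] {M : Matrix n n α} (hM : M.IsHermitian) (u w : n → α) :
    star (star u ⬝ᵥ M *ᵥ w) = star w ⬝ᵥ M *ᵥ u := by
  rw [← star_dotProduct_star, star_mulVec, star_star, ← dotProduct_mulVec, hM.eq]

theorem Matrix.IsHermitian.star_dotProduct_mulVec_smul_sub_smul {n : Type*} [Fintype n]
    {M : Matrix n n ℂ} (hM : M.IsHermitian) (c s : ℝ) (u w : n → ℂ) :
    star ((c : ℂ) • u - ((s : ℂ) * Complex.I) • w) ⬝ᵥ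
        M *ᵥ ((c : ℂ) • u - ((s : ℂ) * Complex.I) • w) =
      ((c ^ 2 * (star u ⬝ᵥ M *ᵥ u).re + s ^ 2 * (star w ⬝ᵥ M *ᵥ w).re +
        2 * c * s * (star u ⬝ᵥ M *ᵥ w).im : ℝ) : ℂ) := by
  have hwu : star w ⬝ᵥ M *ᵥ u = star (star u ⬝ᵥ M *ᵥ w) :=
    (hM.star_dotProduct_mulVec_comm u w).symm
  have hu : (star u ⬝ᵥ M *ᵥ u).im = 0 := hM.im_star_dotProduct_mulVec_self u
  have hw : (star w ⬝ᵥ M *ᵥ w).im = 0 := hM.im_star_dotProduct_mulVec_self w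
  simp only [mulVec_sub, mulVec_smul, star_sub, star_smul, sub_dotProduct, dotProduct_sub,
    smul_dotProduct, dotProduct_smul, hwu, smul_eq_mul, star_mul', Complex.star_def,
    Complex.conj_ofReal, Complex.conj_I]
  apply Complex.ext
  · simp [-Complex.ofReal_pow]
    ring
  · simp [hu, hw, -Complex.ofReal_pow]
    ring

theorem Real.cos_sq_half_mul_add_sin_sq_half_mul_add (A B C x : ℝ) :
    cos (x / 2) ^ 2 * A + sin (x / 2) ^ 2 * B + 2 * cos (x / 2) * sin (x / 2) * C =
      (A + B) / 2 + (A - B) / 2 * cos x + C * sin x := by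
  have hcos : cos x = 2 * cos (x / 2) ^ 2 - 1 := by
    rw [← cos_two_mul, mul_div_cancel₀ x two_ne_zero]
  have hsin : sin x = 2 * sin (x / 2) * cos (x / 2) := by
    rw [← sin_two_mul, mul_div_cancel₀ x two_ne_zero]
  linear_combination (-(A - B) / 2) * hcos - C * hsin + B * sin_sq_add_cos_sq (x / 2)

theorem stmt_18_general (N : ℕ) (M G : Matrix (Fin N) (Fin N) ℂ)
    (hM : Mᴴ = M) (hG2 : G * G = 1) (v : Fin N → ℂ) :
    ∃ a b c : ℝ, ∀ x : ℝ,
      (star ((NormedSpace.exp ((-(Complex.I * ((x / 2 : ℝ) : ℂ))) • G)).mulVec v)) ⬝ᵥ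
          (M.mulVec ((NormedSpace.exp ((-(Complex.I * ((x / 2 : ℝ) : ℂ))) • G)).mulVec v)) =
        ((a + b * Real.cos x + c * Real.sin x : ℝ) : ℂ) := by
  set A := (star v ⬝ᵥ M *ᵥ v).re
  set B := (star (G *ᵥ v) ⬝ᵥ M *ᵥ (G *ᵥ v)).re
  refine ⟨(A + B) / 2, (A - B) / 2, (star v ⬝ᵥ M *ᵥ (G *ᵥ v)).im, fun x => ?_⟩
  rw [NormedSpace.exp_neg_I_mul_smul_of_mul_self_eq_one hG2, ← Complex.ofReal_cos,
    ← Complex.ofReal_sin, sub_mulVec, smul_mulVec, smul_mulVec, one_mulVec,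
    IsHermitian.star_dotProduct_mulVec_smul_sub_smul hM,
    Real.cos_sq_half_mul_add_sin_sq_half_mul_add]

theorem stmt_18 (N : ℕ) (hN : 0 < N) (M G : Matrix (Fin N) (Fin N) ℂ)
    (hM : Mᴴ = M) (hG : Gᴴ = G) (hG2 : G * G = 1) (v : Fin N → ℂ) :
    ∃ a b c : ℝ, ∀ x : ℝ,
      (star ((NormedSpace.exp ((-(Complex.I * ((x / 2 : ℝ) : ℂ))) • G)).mulVec v)) ⬝ᵥ
          (M.mulVec ((NormedSpace.exp ((-(Complex.I * ((x / 2 : ℝ) : ℂ))) • G)).mulVec v)) =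
        ((a + b * Real.cos x + c * Real.sin x : ℝ) : ℂ) :=
  stmt_18_general N M G hM hG2 v
end

section
/- (The VQA objective lies in H) Let N and m be positive integers, let M be an N×N complex Hermitian matrix, let C_1, …, C_{m+1} be N×N unitary complex matrices, let G_1, …, G_m be N×N Hermitian complex matrices with G_j·G_j = 1 for all j, and let v ∈ ℂ^N. For θ ∈ ℝ^m define ψ(θ) = C_{m+1}·exp(−(i·θ_m/2)·G_m)·C_m · ⋯ · exp(−(i·θ_1/2)·G_1)·C_1 · v and f(θ) = star(ψ(θ)) ⬝ᵥ (M.mulVec ψ(θ)). Then there exist coefficients c : Ω → ℂ with c(−ω) = conj(c(ω)) for all ω ∈ Ω = {−1,0,1}^m such that for every θ ∈ ℝ^m, f(θ) = Σ_{ω∈Ω} c(ω)·exp(i·ωᵀθ); in particular f takes real values and lies in H. -/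
/-!
Since `G_j ^ 2 = 1`, each rotation splits along the two eigenprojections of `G_j`:
`exp (-(i x / 2) G) = e^{-i x/2} (1 + G)/2 + e^{i x/2} (1 - G)/2`. Multiplying out, `ψ(θ)` is a
sum over branches `s ∈ {0,1}^m` of fixed vectors `u_s` weighted by `∏_j e^{± i θ_j / 2}`, so in
`⟨ψ, M ψ⟩` the pair of branches `(s, t)` contributes `⟨u_s, M u_t⟩ exp (i (t - s)ᵀθ)` with
`t - s ∈ Ω`. Grouping the pairs by `t - s` gives the coefficients `c`; exchanging `s` and `t`
conjugates `⟨u_s, M u_t⟩` because `M` is Hermitian, whence `c (-ω) = conj (c ω)` and the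
expectation is real.
-/

open MeasureTheory Real Finset

noncomputable section

open Matrix in
/-- The state `ψ(θ) = C_{m+1} · R_m(θ_m) · C_m · ⋯ · R_1(θ_1) · C_1 · v`, where
`R_j(x) = exp(-(i x / 2) G_j)`. (Indices are 0-based: `C j.castSucc` is applied
before the rotation generated by `G j`, and `C (Fin.last m)` is applied last.) -/
def psiVec (N m : ℕ) (C : Fin (m + 1) → Matrix (Fin N) (Fin N) ℂ)
    (G : Fin m → Matrix (Fin N) (Fin N) ℂ) (v : Fin N → ℂ) (θ : Fin m → ℝ) :
    Fin N → ℂ :=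
  (C (Fin.last m) *
      ((List.ofFn fun j : Fin m =>
          NormedSpace.exp ((-(Complex.I * ((θ j / 2 : ℝ) : ℂ))) • G j) *
            C j.castSucc).reverse).prod).mulVec v


namespace NormedSpace

variable {𝔸 : Type*} [NormedRing 𝔸] [NormedAlgebra ℂ 𝔸] [CompleteSpace 𝔸]

theorem exp_mul_of_mul_eq_smul {a p : 𝔸} {z : ℂ} (h : a * p = z • p) :
    NormedSpace.exp a * p = Complex.exp z • p := by
  have hpow (k : ℕ) : a ^ k * p = z ^ k • p := by
    induction k with
    | zero => simp
    | succ k ih => rw [pow_succ', mul_assoc, ih, mul_smul_comm, h, smul_smul, pow_succ, mul_comm]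
  have hs := (exp_series_hasSum_exp' (𝕂 := ℂ) a).mul_right p
  have hz := (exp_series_hasSum_exp' (𝕂 := ℂ) z).smul_const p
  rw [← Complex.exp_eq_exp_ℂ] at hz
  refine hs.unique (hz.congr_fun fun k => ?_)
  simp only [smul_mul_assoc, hpow, smul_smul, smul_eq_mul]

theorem exp_smul_of_mul_self_eq_one_s19 {g : 𝔸} (hg : g * g = 1) (z : ℂ) :
    NormedSpace.exp (z • g) =
      Complex.exp z • ((2 : ℂ)⁻¹ • (1 + g)) + Complex.exp (-z) • ((2 : ℂ)⁻¹ • (1 - g)) := by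
  have hp : (z • g) * ((2 : ℂ)⁻¹ • (1 + g)) = z • ((2 : ℂ)⁻¹ • (1 + g)) := by
    rw [smul_mul_assoc, mul_smul_comm, mul_add, hg, mul_one, add_comm]
  have hq : (z • g) * ((2 : ℂ)⁻¹ • (1 - g)) = (-z) • ((2 : ℂ)⁻¹ • (1 - g)) := by
    rw [smul_mul_assoc, mul_smul_comm, mul_sub, hg, mul_one, neg_smul, ← smul_neg, ← smul_neg,
      neg_sub]
  have hsplit : ((2 : ℂ)⁻¹ • (1 + g)) + ((2 : ℂ)⁻¹ • (1 - g)) = 1 := by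
    rw [← smul_add, add_add_sub_cancel, ← two_smul ℂ, smul_smul, inv_mul_cancel₀ two_ne_zero,
      one_smul]
  conv_lhs => rw [← mul_one (NormedSpace.exp _), ← hsplit]
  rw [mul_add, exp_mul_of_mul_eq_smul hp, exp_mul_of_mul_eq_smul hq]

end NormedSpace

namespace List

theorem prod_reverse_ofFn_succ {M : Type*} [Monoid M] {n : ℕ} (f : Fin (n + 1) → M) :
    (ofFn f).reverse.prod = (ofFn fun j : Fin n => f j.succ).reverse.prod * f 0 := by
  rw [ofFn_succ, reverse_cons, prod_append, prod_singleton]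

theorem prod_reverse_ofFn_sum {R β : Type*} [Semiring R] [Fintype β] {n : ℕ}
    (F : Fin n → β → R) :
    (ofFn fun j => ∑ b, F j b).reverse.prod =
      ∑ s : Fin n → β, (ofFn fun j => F j (s j)).reverse.prod := by
  induction n with
  | zero => simp
  | succ n ih =>
    rw [prod_reverse_ofFn_succ, ih fun j => F j.succ, Finset.sum_mul_sum,
      ← (Fin.consEquiv fun _ => β).sum_comp, Fintype.sum_prod_type, Finset.sum_comm]
    simp only [Fin.consEquiv, Equiv.coe_fn_mk, prod_reverse_ofFn_succ, Fin.cons_zero,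
      Fin.cons_succ]

theorem prod_reverse_ofFn_smul {R A : Type*} [CommMonoid R] [Monoid A] [MulAction R A]
    [IsScalarTower R A A] [SMulCommClass R A A] {n : ℕ} (c : Fin n → R) (a : Fin n → A) :
    (ofFn fun j => c j • a j).reverse.prod = (∏ j, c j) • (ofFn a).reverse.prod := by
  induction n with
  | zero => simp
  | succ n ih =>
    rw [prod_reverse_ofFn_succ, prod_reverse_ofFn_succ a, ih fun j => c j.succ,
      smul_mul_smul_comm, Fin.prod_univ_succ, mul_comm]

end List

open Matrix

theorem Matrix.IsHermitian.star_dotProduct_mulVec {n : Type*} [Fintype n]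
    {M : Matrix n n ℂ} (hM : M.IsHermitian) (x y : n → ℂ) :
    star (star x ⬝ᵥ M *ᵥ y) = star y ⬝ᵥ M *ᵥ x := by
  rw [star_dotProduct y, star_mulVec, hM, dotProduct_mulVec]

theorem star_sum_smul_dotProduct_mulVec {n ι : Type*} [Fintype n] [Fintype ι]
    (M : Matrix n n ℂ) (a : ι → ℂ) (u : ι → n → ℂ) :
    star (∑ s, a s • u s) ⬝ᵥ M *ᵥ (∑ t, a t • u t) =
      ∑ s, ∑ t, star (a s) * a t * (star (u s) ⬝ᵥ M *ᵥ u t) := by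
  simp only [star_sum, star_smul, mulVec_sum, mulVec_smul, sum_dotProduct, dotProduct_sum,
    smul_dotProduct, dotProduct_smul, smul_eq_mul, Finset.mul_sum]
  rw [Finset.sum_comm]
  exact Finset.sum_congr rfl fun _ _ => Finset.sum_congr rfl fun _ _ => by ring

theorem neg_mem_Omega {m : ℕ} {ω : Fin m → ℤ} (hω : ω ∈ Omega m) : -ω ∈ Omega m := by
  rw [Omega, Finset.mem_Icc] at hω ⊢
  exact ⟨by simpa using neg_le_neg hω.2, by simpa using neg_le_neg hω.1⟩

theorem dotIZ_neg {m : ℕ} (ω : Fin m → ℤ) (z : Fin m → ℝ) : dotIZ (-ω) z = -dotIZ ω z := by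
  simp [dotIZ]

theorem conj_sum_Omega_eq_self {m : ℕ} {c : (Fin m → ℤ) → ℂ}
    (hc : ∀ ω ∈ Omega m, c (-ω) = starRingEnd ℂ (c ω)) (z : Fin m → ℝ) :
    starRingEnd ℂ (∑ ω ∈ Omega m, c ω * Complex.exp (Complex.I * (dotIZ ω z : ℂ))) =
      ∑ ω ∈ Omega m, c ω * Complex.exp (Complex.I * (dotIZ ω z : ℂ)) := by
  rw [map_sum]
  refine Finset.sum_nbij' (-·) (-·) (fun _ => neg_mem_Omega) (fun _ => neg_mem_Omega)
    (fun ω _ => neg_neg ω) (fun ω _ => neg_neg ω) fun ω hω => ?_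
  rw [map_mul, ← hc ω hω, ← Complex.exp_conj, dotIZ_neg]
  simp

-- `b = false` labels the `+1`-eigenspace of `G` and `b = true` the `-1`-eigenspace.
def rotationPhase (b : Bool) (x : ℝ) : ℂ :=
  Complex.exp (Complex.I * ((b.toNat : ℂ) - 2⁻¹) * x)

def rotationProj {N : ℕ} (G : Matrix (Fin N) (Fin N) ℂ) (b : Bool) : Matrix (Fin N) (Fin N) ℂ :=
  cond b ((2 : ℂ)⁻¹ • (1 - G)) ((2 : ℂ)⁻¹ • (1 + G))

theorem exp_rotation_eq_sum {N : ℕ} {G : Matrix (Fin N) (Fin N) ℂ} (hG : G * G = 1) (x : ℝ) :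
    NormedSpace.exp ((-(Complex.I * ((x / 2 : ℝ) : ℂ))) • G) =
      ∑ b, rotationPhase b x • rotationProj G b := by
  -- `NormedSpace.exp` does not depend on the norm, so any submultiplicative one will do.
  let _ := Matrix.linftyOpNormedRing (n := Fin N) (α := ℂ)
  let _ := Matrix.linftyOpNormedAlgebra (n := Fin N) (R := ℂ) (α := ℂ)
  refine (NormedSpace.exp_smul_of_mul_self_eq_one_s19 hG _).trans ?_
  rw [Fintype.sum_bool, add_comm]
  simp only [rotationPhase, rotationProj, cond_true, cond_false, Bool.toNat_true,
    Bool.toNat_false]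
  push_cast
  ring_nf

theorem star_rotationPhase_mul (b b' : Bool) (x : ℝ) :
    star (rotationPhase b x) * rotationPhase b' x =
      Complex.exp (Complex.I * (((b'.toNat : ℤ) - b.toNat : ℤ) * x : ℝ)) := by
  rw [rotationPhase, rotationPhase, Complex.star_def, ← Complex.exp_conj, ← Complex.exp_add]
  congr 1
  simp only [map_mul, map_sub, map_inv₀, map_ofNat, map_natCast, Complex.conj_I,
    Complex.conj_ofReal]
  push_cast
  ring

section Branches

variable {N m : ℕ} (C : Fin (m + 1) → Matrix (Fin N) (Fin N) ℂ)
  (G : Fin m → Matrix (Fin N) (Fin N) ℂ) (v : Fin N → ℂ)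

def branchState (s : Fin m → Bool) : Fin N → ℂ :=
  (C (Fin.last m) *
    (List.ofFn fun j => rotationProj (G j) (s j) * C j.castSucc).reverse.prod) *ᵥ v

def branchPhase (s : Fin m → Bool) (θ : Fin m → ℝ) : ℂ := ∏ j, rotationPhase (s j) (θ j)

def branchFrequency (s t : Fin m → Bool) : Fin m → ℤ := fun j => (t j).toNat - (s j).toNat

theorem psiVec_eq_sum_branchState (hG : ∀ j, G j * G j = 1) (θ : Fin m → ℝ) :
    psiVec N m C G v θ = ∑ s, branchPhase s θ • branchState C G v s := by
  simp only [psiVec, exp_rotation_eq_sum (hG _), Finset.sum_mul, smul_mul_assoc]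
  rw [List.prod_reverse_ofFn_sum, Finset.mul_sum, sum_mulVec]
  refine Finset.sum_congr rfl fun s _ => ?_
  rw [List.prod_reverse_ofFn_smul, mul_smul_comm, smul_mulVec]
  rfl

theorem star_branchPhase_mul (s t : Fin m → Bool) (θ : Fin m → ℝ) :
    star (branchPhase s θ) * branchPhase t θ =
      Complex.exp (Complex.I * (dotIZ (branchFrequency s t) θ : ℂ)) := by
  simp only [branchPhase, star_prod, ← Finset.prod_mul_distrib, star_rotationPhase_mul,
    ← Complex.exp_sum, dotIZ, branchFrequency, Finset.mul_sum, Complex.ofReal_sum]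

theorem branchFrequency_mem_Omega (s t : Fin m → Bool) : branchFrequency s t ∈ Omega m := by
  rw [Omega, Finset.mem_Icc]
  refine ⟨fun j => ?_, fun j => ?_⟩ <;>
  · have := (s j).toNat_le
    have := (t j).toNat_le
    simp only [branchFrequency, Pi.neg_apply, Pi.one_apply]
    omega

theorem branchFrequency_swap (s t : Fin m → Bool) :
    branchFrequency t s = -branchFrequency s t := by
  funext j
  simp [branchFrequency]

end Branches

section Expectation

variable {N m : ℕ} (M : Matrix (Fin N) (Fin N) ℂ) (C : Fin (m + 1) → Matrix (Fin N) (Fin N) ℂ)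
  (G : Fin m → Matrix (Fin N) (Fin N) ℂ) (v : Fin N → ℂ)

def expectationCoeff (ω : Fin m → ℤ) : ℂ :=
  ∑ p ∈ Finset.univ.filter fun p : (Fin m → Bool) × (Fin m → Bool) =>
      branchFrequency p.1 p.2 = ω,
    star (branchState C G v p.1) ⬝ᵥ M *ᵥ branchState C G v p.2

theorem expectation_eq_sum_Omega (hG : ∀ j, G j * G j = 1) (θ : Fin m → ℝ) :
    star (psiVec N m C G v θ) ⬝ᵥ M *ᵥ psiVec N m C G v θ =
      ∑ ω ∈ Omega m, expectationCoeff M C G v ω * Complex.exp (Complex.I * (dotIZ ω θ : ℂ)) := by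
  rw [psiVec_eq_sum_branchState C G v hG, star_sum_smul_dotProduct_mulVec,
    ← Fintype.sum_prod_type', ← Finset.sum_fiberwise_of_maps_to
      (g := fun p => branchFrequency p.1 p.2) fun p _ => branchFrequency_mem_Omega p.1 p.2]
  refine Finset.sum_congr rfl fun ω _ => ?_
  rw [expectationCoeff, Finset.sum_mul]
  refine Finset.sum_congr rfl fun p hp => ?_
  rw [star_branchPhase_mul, (Finset.mem_filter.mp hp).2, mul_comm]

theorem expectationCoeff_neg (hM : M.IsHermitian) (ω : Fin m → ℤ) :
    expectationCoeff M C G v (-ω) = starRingEnd ℂ (expectationCoeff M C G v ω) := by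
  rw [expectationCoeff, expectationCoeff, map_sum]
  refine Finset.sum_nbij' Prod.swap Prod.swap (fun p hp => ?_) (fun p hp => ?_)
    (fun p _ => rfl) (fun p _ => rfl) fun p _ => (hM.star_dotProduct_mulVec _ _).symm
  all_goals
    simp only [Finset.mem_filter, Finset.mem_univ, true_and, Prod.fst_swap, Prod.snd_swap]
      at hp ⊢
    rw [branchFrequency_swap, hp]
  simp

end Expectation

open Matrix in
theorem stmt_19_general (N m : ℕ)
    (M : Matrix (Fin N) (Fin N) ℂ) (hM : Mᴴ = M)
    (C : Fin (m + 1) → Matrix (Fin N) (Fin N) ℂ)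
    (G : Fin m → Matrix (Fin N) (Fin N) ℂ)
    (hG2 : ∀ j, G j * G j = 1) (v : Fin N → ℂ) :
    (∃ c : (Fin m → ℤ) → ℂ,
        (∀ ω ∈ Omega m, c (-ω) = starRingEnd ℂ (c ω)) ∧
        ∀ θ : Fin m → ℝ,
          (star (psiVec N m C G v θ)) ⬝ᵥ (M.mulVec (psiVec N m C G v θ)) =
            ∑ ω ∈ Omega m, c ω * Complex.exp (Complex.I * ((dotIZ ω θ : ℝ) : ℂ))) ∧
    (∀ θ : Fin m → ℝ,
        ((((star (psiVec N m C G v θ)) ⬝ᵥ (M.mulVec (psiVec N m C G v θ))).re : ℝ) : ℂ) =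
          (star (psiVec N m C G v θ)) ⬝ᵥ (M.mulVec (psiVec N m C G v θ))) ∧
    IsInH m (fun θ => ((star (psiVec N m C G v θ)) ⬝ᵥ (M.mulVec (psiVec N m C G v θ))).re) := by
  have hrepr := expectation_eq_sum_Omega M C G v hG2
  have hsymm (ω : Fin m → ℤ) (_ : ω ∈ Omega m) := expectationCoeff_neg M C G v hM ω
  have hreal (θ : Fin m → ℝ) :
      ((star (psiVec N m C G v θ) ⬝ᵥ M *ᵥ psiVec N m C G v θ).re : ℂ) =
        star (psiVec N m C G v θ) ⬝ᵥ M *ᵥ psiVec N m C G v θ := by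
    refine Complex.conj_eq_iff_re.mp ?_
    rw [hrepr θ]
    exact conj_sum_Omega_eq_self hsymm θ
  exact ⟨⟨_, hsymm, hrepr⟩, hreal, _, hsymm, fun θ => (hreal θ).trans (hrepr θ)⟩

open Matrix in
theorem stmt_19 (N m : ℕ) (hN : 0 < N) (hm : 0 < m)
    (M : Matrix (Fin N) (Fin N) ℂ) (hM : Mᴴ = M)
    (C : Fin (m + 1) → Matrix (Fin N) (Fin N) ℂ) (hC : ∀ j, (C j)ᴴ * C j = 1)
    (G : Fin m → Matrix (Fin N) (Fin N) ℂ) (hG : ∀ j, (G j)ᴴ = G j)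
    (hG2 : ∀ j, G j * G j = 1) (v : Fin N → ℂ) :
    (∃ c : (Fin m → ℤ) → ℂ,
        (∀ ω ∈ Omega m, c (-ω) = starRingEnd ℂ (c ω)) ∧
        ∀ θ : Fin m → ℝ,
          (star (psiVec N m C G v θ)) ⬝ᵥ (M.mulVec (psiVec N m C G v θ)) =
            ∑ ω ∈ Omega m, c ω * Complex.exp (Complex.I * ((dotIZ ω θ : ℝ) : ℂ))) ∧
    (∀ θ : Fin m → ℝ,
        ((((star (psiVec N m C G v θ)) ⬝ᵥ (M.mulVec (psiVec N m C G v θ))).re : ℝ) : ℂ) =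
          (star (psiVec N m C G v θ)) ⬝ᵥ (M.mulVec (psiVec N m C G v θ))) ∧
    IsInH m (fun θ => ((star (psiVec N m C G v θ)) ⬝ᵥ (M.mulVec (psiVec N m C G v θ))).re) :=
  stmt_19_general N m M hM C G hG2 v
end
end
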